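/- Let x_1,...,x_m, y_1,...,y_m, t be elements of a commutative ring with x_j y_j = t for all j. Let V^m_i be the m×m matrix whose rows are (x_1^r,...,x_m^r) for r = 0,...,m-i followed by (y_1^s,...,y_m^s) for s = 1,...,i-1, and set G_i = det(V^m_i). Then for each i, t^{m-i} · G_{i+1} = ± (y_1⋯y_m) · G_i, i.e., G_{i+1} is obtained from G_i by multiplying by the product of the y_j and dividing by a power of t, up to sign. -/

import Mathlib

/-!
Multiplying column `j` of `V^m_i` by `y_j` turns the row `x^0` into `y^1`, each row `x^r` with
`1 ≤ r ≤ m - i` into `t · x^(r-1)`, and each row `y^s` into `y^(s+1)`. Up to the factor `t` on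
`m - i` rows, these are the rows of `V^m_{i+1}`, moved by the cycle `(0 1 ⋯ m-i)` of sign
`(-1)^(m-i)`.
-/

open Finset

/-- `mixedVandermonde x y (m - i)` is the paper's `V^m_i`. -/
def mixedVandermonde {R : Type*} [CommRing R] {m : ℕ} (x y : Fin m → R) (k : ℕ) :
    Matrix (Fin m) (Fin m) R :=
  Matrix.of fun r j => if (r : ℕ) ≤ k then x j ^ (r : ℕ) else y j ^ ((r : ℕ) - k)

section

variable {R : Type*} [CommRing R] {m : ℕ} {x y : Fin m → R} {t : R}

theorem prod_ite_val_le_eq_pow {k : ℕ} (hk : k < m) (a : R) :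
    ∏ r : Fin m, (if (r : ℕ) ≤ k then a else 1) = a ^ (k + 1) := by
  rw [prod_ite, prod_const, prod_const_one, mul_one]
  simp only [Nat.le_iff_lt_add_one, Fin.card_filter_val_lt]
  rw [min_eq_right (by omega)]

theorem mixedVandermonde_mul_row_submatrix_cycleRange (hxy : ∀ j, x j * y j = t) {k : ℕ}
    (hk : k + 1 < m) :
    (Matrix.of fun r j => y j * mixedVandermonde x y (k + 1) r j).submatrix
        (Fin.cycleRange ⟨k + 1, hk⟩) id =
      Matrix.of fun (r j : Fin m) =>
        (if (r : ℕ) ≤ k then t else 1) * mixedVandermonde x y k r j := by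
  ext r j
  simp only [Matrix.submatrix_apply, id_eq, Matrix.of_apply, mixedVandermonde]
  rcases lt_trichotomy (r : ℕ) (k + 1) with hr | hr | hr
  · have hσ := Fin.coe_cycleRange_of_lt (i := r) (j := ⟨k + 1, hk⟩) hr
    rw [hσ, if_pos (by omega), if_pos (by omega), if_pos (by omega), pow_succ, ← hxy j]
    ring
  · have hσ := Fin.coe_cycleRange_of_le (i := r) (j := ⟨k + 1, hk⟩) hr.le
    rw [if_pos (Fin.ext hr)] at hσ
    rw [hσ, hr, if_pos (Nat.zero_le _), if_neg (by omega), if_neg (by omega),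
      Nat.add_sub_cancel_left]
    ring
  · have hσ := Fin.cycleRange_of_gt (i := ⟨k + 1, hk⟩) (j := r) hr
    rw [hσ, if_neg (by omega), if_neg (by omega), if_neg (by omega),
      show (r : ℕ) - k = (r : ℕ) - (k + 1) + 1 by omega, pow_succ]
    ring

theorem pow_mul_det_mixedVandermonde (hxy : ∀ j, x j * y j = t) {k : ℕ} (hk : k + 1 < m) :
    t ^ (k + 1) * (mixedVandermonde x y k).det =
      (-1) ^ (k + 1) * ((∏ j, y j) * (mixedVandermonde x y (k + 1)).det) := by
  have hdet := congrArg Matrix.det (mixedVandermonde_mul_row_submatrix_cycleRange hxy hk)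
  rw [Matrix.det_permute, Matrix.det_mul_row, Matrix.det_mul_column,
    prod_ite_val_le_eq_pow (by omega), Fin.sign_cycleRange] at hdet
  rw [← hdet]
  push_cast
  ring

end

open Finset in
/-- Mixed Van der Monde determinants: with `x_j y_j = t` for all `j`, let `V^m_i` be
the `m×m` matrix with rows `(x_1^r,...,x_m^r)` for `r = 0,...,m-i` followed by
`(y_1^s,...,y_m^s)` for `s = 1,...,i-1`, and `G_i = det V^m_i`. Then
`t^{m-i} · G_{i+1} = ± (y_1⋯y_m) · G_i`. -/
theorem stmt_6 {R : Type*} [CommRing R] (m : ℕ) (x y : Fin m → R) (t : R)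
    (hxy : ∀ j, x j * y j = t) (i : ℕ) (h1 : 1 ≤ i) (h2 : i + 1 ≤ m) :
    let G : ℕ → R := fun i' => Matrix.det (Matrix.of fun (r j : Fin m) =>
      if (r : ℕ) ≤ m - i' then x j ^ (r : ℕ) else y j ^ ((r : ℕ) - (m - i')))
    t ^ (m - i) * G (i + 1) = (∏ j, y j) * G i ∨
      t ^ (m - i) * G (i + 1) = -((∏ j, y j) * G i) := by
  intro G
  obtain ⟨k, hk⟩ : ∃ k, m - i = k + 1 := ⟨m - i - 1, by omega⟩
  have hGi : G i = (mixedVandermonde x y (k + 1)).det := by simp only [G, hk]; rfl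
  have hGi1 : G (i + 1) = (mixedVandermonde x y k).det := by
    simp only [G, show m - (i + 1) = k by omega]; rfl
  rw [hk, hGi, hGi1, pow_mul_det_mixedVandermonde hxy (by omega)]
  rcases neg_one_pow_eq_or R (k + 1) with hs | hs <;> rw [hs]
  · exact Or.inl (one_mul _)
  · exact Or.inr (neg_one_mul _)
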